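/- arXiv:1311.4332 — 2 statements merged into one kernel-verified Lean document; each statement's English description precedes it below -/
import Mathlib

section
/- Let E be a directed graph such that E^0 is nonempty and downward directed, E has no sinks (every vertex emits at least one edge), and there is a countable subset S ⊆ E^0 such that every vertex of E^0 connects to some vertex of S. Then there exists an infinite path p in E such that every vertex of E^0 connects to some vertex of p^0. -/
/-- A directed graph: a set of vertices, a set of edges, and source/range maps. -/
structure DirGraph where
  V : Type
  E : Type
  src : E → V
  rng : E → V

namespace DirGraph

variable (G : DirGraph)

/-- `Connects u v` means there is a finite path (possibly of length 0) from `u` to `v`,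
i.e. `u ≥ v`. -/
inductive Connects : G.V → G.V → Prop
  | refl (v : G.V) : Connects v v
  | step {u w : G.V} (e : G.E) : G.src e = u → Connects (G.rng e) w → Connects u w

/-- A vertex is a sink if it emits no edges. -/
def IsSink (v : G.V) : Prop := ∀ e : G.E, G.src e ≠ v

/-- A vertex is an infinite emitter if it emits infinitely many edges. -/
def IsInfiniteEmitter (v : G.V) : Prop := {e : G.E | G.src e = v}.Infinite

/-- A vertex is regular if it emits finitely many, but at least one, edges. -/
def IsRegular (v : G.V) : Prop :=
  {e : G.E | G.src e = v}.Finite ∧ {e : G.E | G.src e = v}.Nonempty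

/-- A set of vertices is hereditary if it is closed under `≥`. -/
def Hereditary (H : Set G.V) : Prop := ∀ v ∈ H, ∀ w, G.Connects v w → w ∈ H

/-- A set of vertices is saturated if it contains every regular vertex all of whose
emitted edges have range in the set. -/
def Saturated (H : Set G.V) : Prop :=
  ∀ v, G.IsRegular v → (∀ e : G.E, G.src e = v → G.rng e ∈ H) → v ∈ H

/-- `M(v) = {w : w ≥ v}`. -/
def Mv (v : G.V) : Set G.V := {w | G.Connects w v}

/-- A closed path based at `v`: a nonempty list of consecutive edges starting and ending
at `v`. -/
structure ClosedPath (v : G.V) where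
  edges : List G.E
  ne : edges ≠ []
  chain : edges.Chain' (fun e f => G.rng e = G.src f)
  src_eq : G.src (edges.head ne) = v
  rng_eq : G.rng (edges.getLast ne) = v

/-- A cycle based at `v`: a closed path based at `v` which does not pass through any
vertex twice. -/
structure Cycle (v : G.V) extends ClosedPath G v where
  nodup : (edges.map G.src).Nodup

/-- An infinite path: a sequence of consecutive edges, indexed by `ℕ`. -/
structure InfPath where
  edge : ℕ → G.E
  chain : ∀ n, G.rng (edge n) = G.src (edge (n + 1))

variable {G}

@[ext] lemma InfPath.ext {p q : G.InfPath} (h : p.edge = q.edge) : p = q := by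
  cases p; cases q; simp only at h; subst h; rfl

/-- `τ_{>n}(p)`, the shift of the infinite path `p` by `n`. -/
def InfPath.shift (p : G.InfPath) (n : ℕ) : G.InfPath where
  edge k := p.edge (k + n)
  chain k := by have := p.chain (k + n); rwa [show k + n + 1 = k + 1 + n by omega] at this

/-- Two infinite paths are tail-equivalent if some shift of the first equals some shift
of the second. -/
def TailEquiv (p q : G.InfPath) : Prop := ∃ m n : ℕ, p.shift m = q.shift n

/-- The set `p^0` of vertices visited by the infinite path `p`. -/
def InfPath.vertices (p : G.InfPath) : Set G.V := {v | ∃ n : ℕ, G.src (p.edge n) = v}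

/-- `M(p) = {w : w ≥ v for some vertex v on p}`. -/
def Mp (p : G.InfPath) : Set G.V := {w | ∃ v ∈ p.vertices, G.Connects w v}

/-- The set `c^0` of vertices visited by a closed path `c`. -/
def ClosedPath.vertexSet {v : G.V} (c : G.ClosedPath v) : Set G.V :=
  {w | ∃ e ∈ c.edges, G.src e = w}

/-- An exit for the (closed) path `c`: an edge `e` with `s(e) = s(e_i)` and `e ≠ e_i`
for some `i`. -/
def ClosedPath.HasExit {v : G.V} (c : G.ClosedPath v) : Prop :=
  ∃ (i : Fin c.edges.length) (e : G.E), G.src e = G.src (c.edges.get i) ∧ e ≠ c.edges.get i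

lemma ClosedPath.length_pos {v : G.V} (c : G.ClosedPath v) : 0 < c.edges.length :=
  List.length_pos_iff.mpr c.ne

/-- The rational infinite path `c^∞ = ccc⋯` attached to a closed path `c`. -/
def ClosedPath.toInfPath {v : G.V} (c : G.ClosedPath v) : G.InfPath where
  edge n := c.edges.get ⟨n % c.edges.length, Nat.mod_lt _ c.length_pos⟩
  chain n := by
    have hL : 0 < c.edges.length := c.length_pos
    have hmod : (n + 1) % c.edges.length = (n % c.edges.length + 1) % c.edges.length :=
      (Nat.mod_add_mod n c.edges.length 1).symm
    by_cases h : n % c.edges.length + 1 < c.edges.length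
    · have h2 : (n + 1) % c.edges.length = n % c.edges.length + 1 := by
        rw [hmod, Nat.mod_eq_of_lt h]
      have := List.isChain_iff_getElem.mp c.chain (n % c.edges.length) (by omega)
      simp only [h2]
      convert this using 3 <;> rfl
    · have hlast : n % c.edges.length = c.edges.length - 1 := by
        have := Nat.mod_lt n hL; omega
      have h2 : (n + 1) % c.edges.length = 0 := by
        rw [hmod, hlast, Nat.sub_add_cancel hL, Nat.mod_self]
      have e1 : c.edges.get ⟨n % c.edges.length, Nat.mod_lt _ hL⟩ = c.edges.getLast c.ne := by
        rw [List.getLast_eq_getElem]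
        simp [hlast]
      have e2 : c.edges.get ⟨(n + 1) % c.edges.length, Nat.mod_lt _ hL⟩ =
          c.edges.head c.ne := by
        rw [List.head_eq_getElem]
        simp [h2]
      rw [e1, e2, c.rng_eq, c.src_eq]

end DirGraph

namespace DirGraph
variable {G : DirGraph}

lemma InfPath.shift_shift (p : G.InfPath) (m n : ℕ) :
    (p.shift m).shift n = p.shift (n + m) := by
  ext k
  show p.edge (k + n + m) = p.edge (k + (n + m))
  rw [Nat.add_assoc]

/-- Concatenation of two closed paths based at the same vertex. -/
def ClosedPath.comp {v : G.V} (c d : G.ClosedPath v) : G.ClosedPath v where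
  edges := c.edges ++ d.edges
  ne := by simp [c.ne]
  chain := by
    refine c.chain.append d.chain ?_
    intro x hx y hy
    rw [List.getLast?_eq_some_getLast c.ne, Option.mem_def, Option.some_inj] at hx
    rw [List.head?_eq_head d.ne, Option.mem_def, Option.some_inj] at hy
    rw [← hx, ← hy] at *
    rw [c.rng_eq, d.src_eq]
  src_eq := by
    have : (c.edges ++ d.edges).head (by simp [c.ne]) = c.edges.head c.ne := by
      rw [List.head_append]
      simp [c.ne]
    rw [this, c.src_eq]
  rng_eq := by
    have : (c.edges ++ d.edges).getLast (by simp [c.ne]) = d.edges.getLast d.ne := by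
      rw [List.getLast_append]
      simp [d.ne]
    rw [this, d.rng_eq]

/-- `c.pow m` is the closed path `c^{m+1}`. -/
def ClosedPath.pow {v : G.V} (c : G.ClosedPath v) : ℕ → G.ClosedPath v
  | 0 => c
  | (m + 1) => c.comp (c.pow m)

/-- Auxiliary index function for the infinite concatenation of a sequence of closed
paths based at the same vertex: `blockIdx f n` is the pair (block number, offset in
the block) corresponding to overall position `n`. -/
def blockIdx {v : G.V} (f : ℕ → G.ClosedPath v) : ℕ → (b : ℕ) × Fin (f b).edges.length
  | 0 => ⟨0, ⟨0, (f 0).length_pos⟩⟩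
  | n + 1 =>
    if h : ((blockIdx f n).2 : ℕ) + 1 < (f (blockIdx f n).1).edges.length then
      ⟨(blockIdx f n).1, ⟨(blockIdx f n).2 + 1, h⟩⟩
    else
      ⟨(blockIdx f n).1 + 1, ⟨0, (f ((blockIdx f n).1 + 1)).length_pos⟩⟩

/-- The infinite path `f 0 · f 1 · f 2 ⋯` obtained by concatenating a sequence of
closed paths based at the same vertex. -/
def infConcat {v : G.V} (f : ℕ → G.ClosedPath v) : G.InfPath where
  edge n := (f (blockIdx f n).1).edges.get (blockIdx f n).2
  chain n := by
    rw [blockIdx]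
    by_cases h : ((blockIdx f n).2 : ℕ) + 1 < (f (blockIdx f n).1).edges.length
    · rw [dif_pos h]
      exact List.isChain_iff_getElem.mp (f (blockIdx f n).1).chain ((blockIdx f n).2 : ℕ) (by omega)
    · rw [dif_neg h]
      have h2 : ((blockIdx f n).2 : ℕ) = (f (blockIdx f n).1).edges.length - 1 := by
        have := (blockIdx f n).2.isLt; omega
      have e1 : (f (blockIdx f n).1).edges.get (blockIdx f n).2 =
          (f (blockIdx f n).1).edges.getLast (f (blockIdx f n).1).ne := by
        rw [List.getLast_eq_getElem]
        simp only [List.get_eq_getElem]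
        congr 1
      have e2 : (f ((blockIdx f n).1 + 1)).edges.get ⟨0, (f ((blockIdx f n).1 + 1)).length_pos⟩ =
          (f ((blockIdx f n).1 + 1)).edges.head (f ((blockIdx f n).1 + 1)).ne := by
        rw [List.head_eq_getElem]
        rfl
      rw [e1]
      rw [e2]
      rw [(f (blockIdx f n).1).rng_eq]
      rw [(f ((blockIdx f n).1 + 1)).src_eq]

end DirGraph

/-!
Enumerate `S` as `g 0, g 1, …` and walk through the graph in stages. At stage `k` the walk
heads for the set `{x | g k ≥ x}`, which every vertex connects to by directedness, always
taking an edge that strictly decreases the distance to that set; once inside it, the walk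
takes any edge (there are no sinks) and moves on to stage `k + 1`. Every stage ends, so the
resulting infinite path passes below every `g k`, and hence below every vertex.
-/

namespace DirGraph

variable {G : DirGraph}

lemma Connects.trans {u v w : G.V} (huv : G.Connects u v) (hvw : G.Connects v w) :
    G.Connects u w := by
  induction huv with
  | refl => exact hvw
  | step e hs _ ih => exact .step e hs (ih hvw)

def reachWithin (G : DirGraph) (T : Set G.V) : ℕ → Set G.V
  | 0 => T
  | n + 1 => G.reachWithin T n ∪ {u | ∃ e, G.src e = u ∧ G.rng e ∈ G.reachWithin T n}

/-- Junk value `0` when `T` is unreachable from `u`. -/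
noncomputable def distTo (G : DirGraph) (T : Set G.V) (u : G.V) : ℕ :=
  sInf {n | u ∈ G.reachWithin T n}

lemma Connects.exists_mem_reachWithin {T : Set G.V} {u t : G.V} (hut : G.Connects u t)
    (ht : t ∈ T) : ∃ n, u ∈ G.reachWithin T n := by
  induction hut with
  | refl => exact ⟨0, ht⟩
  | step e hs _ ih =>
    obtain ⟨n, hn⟩ := ih ht
    exact ⟨n + 1, Or.inr ⟨e, hs, hn⟩⟩

lemma exists_edge_distTo_lt {T : Set G.V} {u t : G.V} (hut : G.Connects u t) (ht : t ∈ T)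
    (hu : u ∉ T) : ∃ e, G.src e = u ∧ G.distTo T (G.rng e) < G.distTo T u := by
  have hmem : u ∈ G.reachWithin T (G.distTo T u) := Nat.sInf_mem (hut.exists_mem_reachWithin ht)
  obtain ⟨n, hn⟩ : ∃ n, G.distTo T u = n + 1 :=
    Nat.exists_eq_succ_of_ne_zero fun h ↦ hu (by rwa [h] at hmem)
  have hnot : u ∉ G.reachWithin T n :=
    Nat.notMem_of_lt_sInf (s := {m | u ∈ G.reachWithin T m}) (show n < G.distTo T u by omega)
  rw [hn] at hmem
  obtain ⟨e, hs, he⟩ := hmem.resolve_left hnot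
  exact ⟨e, hs, by rw [hn]; exact Nat.lt_succ_of_le (Nat.sInf_le he)⟩

def InfPath.ofIterate {σ : Type*} (next : σ → σ) (edge : σ → G.E)
    (hchain : ∀ s, G.src (edge (next s)) = G.rng (edge s)) (s₀ : σ) : G.InfPath where
  edge n := edge (next^[n] s₀)
  chain n := by rw [Function.iterate_succ_apply', hchain]

section Stages

variable (T : ℕ → Set G.V) (edge : G.V × ℕ → G.E)

open Classical in
noncomputable def stageStep (s : G.V × ℕ) : G.V × ℕ :=
  (G.rng (edge s), if s.1 ∈ T s.2 then s.2 + 1 else s.2)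

variable {T edge}

lemma exists_iterate_stageStep_mem
    (hcloser : ∀ u k, u ∉ T k → G.distTo (T k) (G.rng (edge (u, k))) < G.distTo (T k) u)
    (s : G.V × ℕ) :
    ∃ n, ((stageStep T edge)^[n] s).2 = s.2 ∧ ((stageStep T edge)^[n] s).1 ∈ T s.2 := by
  obtain ⟨u, k⟩ := s
  induction hd : G.distTo (T k) u using Nat.strong_induction_on generalizing u with
  | _ d ih =>
    by_cases hu : u ∈ T k
    · exact ⟨0, rfl, hu⟩
    · have hstep : stageStep T edge (u, k) = (G.rng (edge (u, k)), k) := by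
        simp [stageStep, hu]
      obtain ⟨n, hn⟩ := ih _ (hd ▸ hcloser u k hu) _ rfl
      exact ⟨n + 1, by rwa [Function.iterate_succ_apply, hstep]⟩

lemma exists_iterate_stageStep_snd_eq
    (hcloser : ∀ u k, u ∉ T k → G.distTo (T k) (G.rng (edge (u, k))) < G.distTo (T k) u)
    (u : G.V) (k : ℕ) : ∃ n, ((stageStep T edge)^[n] (u, 0)).2 = k := by
  induction k with
  | zero => exact ⟨0, rfl⟩
  | succ k ih =>
    obtain ⟨n, hn⟩ := ih
    obtain ⟨m, hm, hmem⟩ := exists_iterate_stageStep_mem hcloser ((stageStep T edge)^[n] (u, 0))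
    refine ⟨m + n + 1, ?_⟩
    rw [hn] at hm hmem
    rw [Function.iterate_succ_apply', Function.iterate_add_apply]
    simp [stageStep, hm, hmem]

end Stages

theorem exists_infPath_forall_exists_mem (hnosink : ∀ v : G.V, ∃ e : G.E, G.src e = v)
    (T : ℕ → Set G.V) (hreach : ∀ k u, ∃ t ∈ T k, G.Connects u t) (v₀ : G.V) :
    ∃ p : G.InfPath, ∀ k, ∃ x ∈ p.vertices, x ∈ T k := by
  have hedge : ∀ s : G.V × ℕ, ∃ e, G.src e = s.1 ∧
      (s.1 ∉ T s.2 → G.distTo (T s.2) (G.rng e) < G.distTo (T s.2) s.1) := by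
    rintro ⟨u, k⟩
    by_cases hu : u ∈ T k
    · obtain ⟨e, he⟩ := hnosink u
      exact ⟨e, he, absurd hu⟩
    · obtain ⟨t, ht, hut⟩ := hreach k u
      obtain ⟨e, he, hlt⟩ := exists_edge_distTo_lt hut ht hu
      exact ⟨e, he, fun _ ↦ hlt⟩
  choose edge hsrc hcloser using hedge
  refine ⟨InfPath.ofIterate (stageStep T edge) edge (fun s ↦ hsrc _) (v₀, 0), fun k ↦ ?_⟩
  obtain ⟨n, hn⟩ := exists_iterate_stageStep_snd_eq (fun u k ↦ hcloser (u, k)) v₀ k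
  obtain ⟨m, hm, hmem⟩ :=
    exists_iterate_stageStep_mem (fun u k ↦ hcloser (u, k)) ((stageStep T edge)^[n] (v₀, 0))
  rw [← Function.iterate_add_apply, hn] at hmem
  exact ⟨_, ⟨m + n, hsrc _⟩, hmem⟩

/-- If `E⁰` is nonempty and downward directed, `E` has no sinks, and there is a countable
subset `S ⊆ E⁰` to which every vertex connects, then there is an infinite path `p` such
that every vertex of `E⁰` connects to a vertex on `p`. -/
theorem exists_infinite_path_of_countable_separation {G : DirGraph}
    (hne : Nonempty G.V)
    (hdir : ∀ u w : G.V, ∃ z : G.V, G.Connects u z ∧ G.Connects w z)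
    (hnosink : ∀ v : G.V, ∃ e : G.E, G.src e = v)
    (S : Set G.V) (hS : S.Countable)
    (hsep : ∀ u : G.V, ∃ s ∈ S, G.Connects u s) :
    ∃ p : G.InfPath, ∀ u : G.V, ∃ x ∈ p.vertices, G.Connects u x := by
  obtain ⟨v₀⟩ := hne
  obtain ⟨s₀, hs₀, -⟩ := hsep v₀
  obtain ⟨g, rfl⟩ := hS.exists_eq_range ⟨s₀, hs₀⟩
  have hreach : ∀ k u, ∃ t ∈ {x | G.Connects (g k) x}, G.Connects u t := fun k u ↦ by
    obtain ⟨z, huz, hgz⟩ := hdir u (g k)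
    exact ⟨z, hgz, huz⟩
  obtain ⟨p, hp⟩ := exists_infPath_forall_exists_mem hnosink _ hreach v₀
  refine ⟨p, fun u ↦ ?_⟩
  obtain ⟨_, ⟨k, rfl⟩, hug⟩ := hsep u
  obtain ⟨x, hx, hgx⟩ := hp k
  exact ⟨x, hx, hug.trans hgx⟩

end DirGraph
end

section
/- Let E be a directed graph, let v ∈ E^0, and let g and h be two cycles based at v that are distinct as sequences of edges. Then the infinite path p = g h^2 g h^3 g h^4 ⋯ (the concatenation of g, then two copies of h, then g, then three copies of h, and so on) is not tail-equivalent to the rational path c^∞ for any closed path c in E. -/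
namespace DirGraph

variable {G : DirGraph} {v : G.V}

lemma ClosedPath.src_getElem_zero (c : G.ClosedPath v) : G.src (c.edges[0]'c.length_pos) = v := by
  rw [← List.head_eq_getElem c.ne, c.src_eq]

lemma ClosedPath.rng_getElem_length_sub_one (c : G.ClosedPath v) :
    G.rng (c.edges[c.edges.length - 1]'(by have := c.length_pos; omega)) = v := by
  rw [← List.getLast_eq_getElem c.ne, c.rng_eq]

@[simp] lemma ClosedPath.comp_edges (c d : G.ClosedPath v) : (c.comp d).edges = c.edges ++ d.edges :=
  rfl

@[simp] lemma ClosedPath.pow_edges_length (c : G.ClosedPath v) (m : ℕ) :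
    (c.pow m).edges.length = (m + 1) * c.edges.length := by
  induction m with
  | zero => simp [ClosedPath.pow]
  | succ m ih =>
    rw [ClosedPath.pow, comp_edges, List.length_append, ih]
    ring

lemma ClosedPath.toInfPath_edge_add_length {w : G.V} (c : G.ClosedPath w) (n : ℕ) :
    c.toInfPath.edge (n + c.edges.length) = c.toInfPath.edge n := by
  simp only [ClosedPath.toInfPath, Nat.add_mod_right]

lemma Cycle.eq_zero_of_src_getElem (c : G.Cycle v) {i : ℕ} (hi : i < c.edges.length)
    (hsrc : G.src c.edges[i] = v) : i = 0 := by
  have hmap : (c.edges.map G.src)[i]'(by simpa using hi) =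
      (c.edges.map G.src)[0]'(by simpa using c.length_pos) := by
    rw [List.getElem_map, List.getElem_map, hsrc, c.src_getElem_zero]
  exact c.nodup.getElem_inj_iff.mp hmap

lemma Cycle.edges_eq_of_prefix {g h : G.Cycle v} (hpre : g.edges <+: h.edges) :
    g.edges = h.edges := by
  have hg := g.length_pos
  refine hpre.eq_of_length (le_antisymm hpre.length_le (not_lt.mp fun hlt => ?_))
  have hlast : h.edges[g.edges.length - 1] = g.edges[g.edges.length - 1] :=
    (hpre.getElem (by omega)).symm
  have hchain := List.isChain_iff_getElem.mp h.chain (g.edges.length - 1) (by omega)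
  simp only [Nat.sub_add_cancel hg, hlast, g.rng_getElem_length_sub_one] at hchain
  exact absurd (h.eq_zero_of_src_getElem hlt hchain.symm) (by omega)

section ReadsAt

/-- `p.ReadsAt n l`: the edges of `p` from position `n` on begin with the list `l`. -/
def InfPath.ReadsAt (p : G.InfPath) (n : ℕ) (l : List G.E) : Prop :=
  ∀ i (hi : i < l.length), p.edge (n + i) = l[i]

variable {p : G.InfPath} {n : ℕ}

lemma InfPath.readsAt_append {l₁ l₂ : List G.E} :
    p.ReadsAt n (l₁ ++ l₂) ↔ p.ReadsAt n l₁ ∧ p.ReadsAt (n + l₁.length) l₂ := by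
  refine ⟨fun h => ⟨fun i hi => ?_, fun i hi => ?_⟩, fun ⟨h₁, h₂⟩ i hi => ?_⟩
  · rw [h i (by simp; omega), List.getElem_append_left hi]
  · rw [Nat.add_assoc, h _ (by simp; omega), List.getElem_append_right (by omega)]
    simp
  · by_cases hi₁ : i < l₁.length
    · rw [h₁ i hi₁, List.getElem_append_left hi₁]
    · obtain ⟨j, rfl⟩ := Nat.exists_eq_add_of_le (not_lt.mp hi₁)
      rw [← Nat.add_assoc, h₂ j (by simp at hi; omega), List.getElem_append_right (by omega)]
      simp

lemma InfPath.ReadsAt.pow {c : G.ClosedPath v} {m : ℕ} (hp : p.ReadsAt n (c.pow m).edges)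
    {j : ℕ} (hj : j ≤ m) : p.ReadsAt (n + j * c.edges.length) c.edges := by
  induction m generalizing n j with
  | zero =>
    obtain rfl := Nat.le_zero.mp hj
    rw [Nat.zero_mul, Nat.add_zero]
    exact hp
  | succ m ih =>
    obtain ⟨hc, hrest⟩ := readsAt_append.mp hp
    cases j with
    | zero => simpa using hc
    | succ j =>
      rw [Nat.succ_mul, Nat.add_comm (j * _), ← Nat.add_assoc]
      exact ih hrest (Nat.le_of_succ_le_succ hj)

lemma InfPath.ReadsAt.add_period {L m : ℕ} {l : List G.E}
    (hper : ∀ j, m ≤ j → p.edge (j + L) = p.edge j) (hn : m ≤ n) (hp : p.ReadsAt n l) :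
    p.ReadsAt (n + L) l := fun i hi => by
  rw [Nat.add_right_comm, hper _ (by omega), hp i hi]

lemma Cycle.edges_eq_of_readsAt {g h : G.Cycle v} (hg : p.ReadsAt n g.edges)
    (hh : p.ReadsAt n h.edges) : g.edges = h.edges := by
  wlog hle : g.edges.length ≤ h.edges.length generalizing g h
  · exact (this hh hg (by omega)).symm
  exact Cycle.edges_eq_of_prefix
    (List.prefix_iff_getElem.mpr ⟨hle, fun i hi => by rw [← hg i hi, hh i (by omega)]⟩)

lemma Cycle.eq_zero_of_readsAt {c : G.Cycle v} (hc : p.ReadsAt n c.edges) {i : ℕ}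
    (hi : i < c.edges.length) (hsrc : G.src (p.edge (n + i)) = v) : i = 0 :=
  c.eq_zero_of_src_getElem hi (hc i hi ▸ hsrc)

/-- The shifted `g` must start where a copy of `h` starts, as only there the word `g h^(m+1)`
returns to `v`. -/
lemma Cycle.edges_eq_of_readsAt_comp_pow {g h : G.Cycle v} {m t : ℕ}
    (hw : p.ReadsAt n (g.comp (h.pow m)).edges) (hg : p.ReadsAt (n + t) g.edges)
    (ht₀ : 0 < t) (ht : t < (g.comp (h.pow m)).edges.length) : g.edges = h.edges := by
  obtain ⟨hg₀, hpow⟩ := InfPath.readsAt_append.mp hw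
  have hsrc : G.src (p.edge (n + t)) = v := by
    rw [← Nat.add_zero (n + t), hg 0 g.length_pos]
    exact g.src_getElem_zero
  rcases lt_or_ge t g.edges.length with htg | htg
  · exact absurd (g.eq_zero_of_readsAt hg₀ htg hsrc) ht₀.ne'
  obtain ⟨j, rfl⟩ := Nat.exists_eq_add_of_le htg
  have hh := h.length_pos
  simp only [ClosedPath.comp_edges, List.length_append, ClosedPath.pow_edges_length] at ht
  have hq : j / h.edges.length ≤ m :=
    Nat.lt_succ_iff.mp ((Nat.div_lt_iff_lt_mul hh).mpr (by rw [Nat.succ_eq_add_one]; omega))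
  have hcopy := hpow.pow hq
  have hr : j % h.edges.length = 0 := by
    refine h.eq_zero_of_readsAt hcopy (Nat.mod_lt _ hh) ?_
    rwa [Nat.add_assoc (n + _), Nat.mul_comm, Nat.div_add_mod, Nat.add_assoc]
  have hj : j = j / h.edges.length * h.edges.length := by
    rw [Nat.div_mul_cancel (Nat.dvd_of_mod_eq_zero hr)]
  rw [← Nat.add_assoc, hj] at hg
  exact Cycle.edges_eq_of_readsAt hg hcopy

end ReadsAt

section InfConcat

variable (f : ℕ → G.ClosedPath v)

def blockStart (k : ℕ) : ℕ := ∑ i ∈ Finset.range k, (f i).edges.length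

lemma blockStart_succ (k : ℕ) : blockStart f (k + 1) = blockStart f k + (f k).edges.length :=
  Finset.sum_range_succ _ _

lemma blockStart_strictMono : StrictMono (blockStart f) :=
  strictMono_nat_of_lt_succ fun k => by
    have := (f k).length_pos
    rw [blockStart_succ]
    omega

lemma blockStart_blockIdx_add (n : ℕ) : blockStart f (blockIdx f n).1 + (blockIdx f n).2 = n := by
  induction n with
  | zero => simp [blockIdx, blockStart]
  | succ n ih =>
    rw [blockIdx]
    by_cases hc : ((blockIdx f n).2 : ℕ) + 1 < (f (blockIdx f n).1).edges.length
    · rw [dif_pos hc]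
      simp only
      omega
    · have := (blockIdx f n).2.isLt
      rw [dif_neg hc]
      simp only [blockStart_succ]
      omega

lemma blockStart_add_lt_blockStart {k k' o : ℕ} (ho : o < (f k).edges.length) (hk : k < k') :
    blockStart f k + o < blockStart f k' := by
  have := (blockStart_strictMono f).monotone (Nat.succ_le_of_lt hk)
  rw [blockStart_succ] at this
  omega

lemma eq_of_blockStart_add_eq {k k' o o' : ℕ} (ho : o < (f k).edges.length)
    (ho' : o' < (f k').edges.length) (heq : blockStart f k + o = blockStart f k' + o') :
    k = k' := by
  by_contra hne
  rcases Nat.lt_or_gt_of_ne hne with hlt | hlt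
  · have := blockStart_add_lt_blockStart f ho hlt
    omega
  · have := blockStart_add_lt_blockStart f ho' hlt
    omega

lemma blockIdx_blockStart_add {k o : ℕ} (ho : o < (f k).edges.length) :
    blockIdx f (blockStart f k + o) = ⟨k, ⟨o, ho⟩⟩ := by
  have hspec := blockStart_blockIdx_add f (blockStart f k + o)
  rcases hidx : blockIdx f (blockStart f k + o) with ⟨k', o'⟩
  rw [hidx] at hspec
  obtain rfl := eq_of_blockStart_add_eq f o'.isLt ho hspec
  obtain rfl : o' = ⟨o, ho⟩ := Fin.ext (by simp only at hspec ⊢; omega)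
  rfl

lemma readsAt_infConcat (k : ℕ) : (infConcat f).ReadsAt (blockStart f k) (f k).edges :=
  fun o ho => by
    show (f (blockIdx f _).1).edges.get (blockIdx f _).2 = _
    rw [blockIdx_blockStart_add f ho]
    rfl

end InfConcat

lemma TailEquiv.exists_edge_add_length_eq {p : G.InfPath} {w : G.V} {c : G.ClosedPath w}
    (hpc : TailEquiv p c.toInfPath) :
    ∃ m, ∀ j, m ≤ j → p.edge (j + c.edges.length) = p.edge j := by
  obtain ⟨m, n, hmn⟩ := hpc
  have hedge (k : ℕ) : p.edge (k + m) = c.toInfPath.edge (k + n) :=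
    congrFun (congrArg InfPath.edge hmn) k
  refine ⟨m, fun j hj => ?_⟩
  obtain ⟨k, rfl⟩ := Nat.exists_eq_add_of_le' hj
  rw [Nat.add_right_comm, hedge, hedge, Nat.add_right_comm, c.toInfPath_edge_add_length]

/-- If `g` and `h` are distinct cycles based at the same vertex `v`, then the infinite
path `p = g h² g h³ g h⁴ ⋯` is not tail-equivalent to the rational path `c^∞` for any
closed path `c`. (Here the `k`-th block of `p` is `g·h^{k+2}`, i.e. `g.comp (h.pow (k+1))`.) -/
theorem concat_not_tailEquiv_rational {G : DirGraph} {v : G.V}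
    (g h : G.Cycle v) (hgh : g.edges ≠ h.edges) :
    ¬ ∃ (w : G.V) (c : G.ClosedPath w),
        TailEquiv (infConcat (fun k => g.toClosedPath.comp (h.toClosedPath.pow (k + 1))))
          c.toInfPath := by
  rintro ⟨w, c, hpc⟩
  set f := fun k => g.toClosedPath.comp (h.toClosedPath.pow (k + 1))
  obtain ⟨m, hper⟩ := hpc.exists_edge_add_length_eq
  set k := m + c.edges.length with hk
  have hblock := readsAt_infConcat f k
  have hm : m ≤ blockStart f k := le_trans (by omega) (blockStart_strictMono f).le_apply
  have hshifted := ((InfPath.readsAt_append.mp hblock).1).add_period hper hm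
  refine hgh (Cycle.edges_eq_of_readsAt_comp_pow hblock hshifted c.length_pos ?_)
  have := h.length_pos
  simp only [ClosedPath.comp_edges, List.length_append, ClosedPath.pow_edges_length]
  nlinarith

end DirGraph
end
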